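/- arXiv:1112.5688 — 7 statements merged into one kernel-verified Lean document; each statement's English description precedes it below -/
import Mathlib

section
/- Let X be a normed space, F ⊆ X nonempty closed convex with 0 ∈ F, and Q ⊆ X nonempty. If x ∈ Q − F_∞ (i.e., x = ω − d for some ω ∈ Q, d ∈ F_∞), then the minimal time function satisfies T(x) = 0, where T(x) = inf{t ≥ 0 : (x + t•F) ∩ Q ≠ ∅}. -/
open scoped ENNReal Pointwise

/-- The asymptotic cone of `F` at base point `x`. -/
def asympCone {X : Type*} [NormedAddCommGroup X] [NormedSpace ℝ X]
    (F : Set X) (x : X) : Set X :=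
  {d | ∀ t : ℝ, 0 < t → x + t • d ∈ F}

/-- The minimal time function `T_Q^F`. -/
noncomputable def minTime {X : Type*} [NormedAddCommGroup X] [NormedSpace ℝ X]
    (F Q : Set X) (x : X) : ℝ≥0∞ :=
  sInf (ENNReal.ofReal '' {t : ℝ | 0 ≤ t ∧ ∃ f ∈ F, x + t • f ∈ Q})

/-!
Write `x = ω - d` with `ω ∈ Q` and `d` in the asymptotic cone, so that `t⁻¹ • d ∈ F` for every
`t > 0`. Then `x + t • (t⁻¹ • d) = ω ∈ Q`, so every positive time is admissible.
-/

section MinTime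

variable {X : Type*} [NormedAddCommGroup X] [NormedSpace ℝ X] {F Q : Set X} {x : X}

theorem minTime_le_ofReal {t : ℝ} {f : X} (ht : 0 ≤ t) (hf : f ∈ F) (hQ : x + t • f ∈ Q) :
    minTime F Q x ≤ ENNReal.ofReal t :=
  sInf_le ⟨t, ⟨ht, f, hf, hQ⟩, rfl⟩

theorem minTime_eq_zero_of_forall_pos (h : ∀ t : ℝ, 0 < t → ∃ f ∈ F, x + t • f ∈ Q) :
    minTime F Q x = 0 := by
  refine le_antisymm (ENNReal.le_of_forall_pos_le_add fun ε hε _ => ?_) zero_le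
  obtain ⟨f, hf, hQ⟩ := h ε hε
  simpa using minTime_le_ofReal ε.coe_nonneg hf hQ

theorem mem_asympCone_zero {d : X} : d ∈ asympCone F 0 ↔ ∀ t : ℝ, 0 < t → t • d ∈ F := by
  simp only [asympCone, Set.mem_ofPred_eq, zero_add]

end MinTime

theorem minTime_eq_zero_of_mem_general {X : Type*} [NormedAddCommGroup X] [NormedSpace ℝ X]
    (F : Set X) (Q : Set X)
    (x : X) (hx : x ∈ Q - asympCone F 0) :
    minTime F Q x = 0 := by
  obtain ⟨ω, hω, d, hd, rfl⟩ := hx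
  refine minTime_eq_zero_of_forall_pos fun t ht => ⟨t⁻¹ • d, ?_, ?_⟩
  · exact mem_asympCone_zero.1 hd t⁻¹ (inv_pos.2 ht)
  · rwa [smul_inv_smul₀ ht.ne', sub_add_cancel]

theorem minTime_eq_zero_of_mem {X : Type*} [NormedAddCommGroup X] [NormedSpace ℝ X]
    (F : Set X) (hFne : F.Nonempty) (hFcl : IsClosed F) (hFconv : Convex ℝ F)
    (h0F : (0 : X) ∈ F) (Q : Set X) (hQne : Q.Nonempty)
    (x : X) (hx : x ∈ Q - asympCone F 0) :
    minTime F Q x = 0 :=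
  minTime_eq_zero_of_mem_general F Q x hx
end

section
/- Let X be a finite-dimensional normed space, F ⊆ X nonempty closed convex with 0 ∈ F, and Q ⊆ X a nonempty compact set. Then T_Q^F(x) = 0 if and only if x ∈ Q − F_∞. -/
open scoped ENNReal Pointwise

/-! If `T(x) = 0`, there are `tₙ → 0⁺` and `fₙ ∈ F` with `x + tₙ • fₙ ∈ Q`. By compactness of `Q`,
along a subsequence `x + tₙ • fₙ → q ∈ Q`, so `tₙ • fₙ → q - x`; for fixed `s > 0` the points
`(s tₙ) • fₙ` eventually lie in `F` (convexity and `0 ∈ F`) and tend to `s • (q - x)`, which is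
therefore in the closed set `F`. Conversely, if `x = q - d` then `x + t • (t⁻¹ • d) = q` for every
`t > 0`. -/

section MinTime

open Filter Topology

variable {X : Type*} [NormedAddCommGroup X] [NormedSpace ℝ X] {F Q : Set X} {x : X}

theorem minTime_eq_zero_iff_forall_exists :
    minTime F Q x = 0 ↔ ∀ ε : ℝ, 0 < ε → ∃ t ∈ Set.Ico 0 ε, ∃ f ∈ F, x + t • f ∈ Q := by
  rw [minTime, ← ENNReal.bot_eq_zero, sInf_eq_bot]
  constructor
  · intro h ε hε
    obtain ⟨_, ⟨t, ⟨ht0, hf⟩, rfl⟩, htε⟩ := h (ENNReal.ofReal ε) (ENNReal.ofReal_pos.2 hε)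
    exact ⟨t, ⟨ht0, (ENNReal.ofReal_lt_ofReal_iff hε).1 htε⟩, hf⟩
  · intro h b hb
    obtain ⟨ε, -, hε, hεb⟩ := ENNReal.lt_iff_exists_real_btwn.1 hb
    obtain ⟨t, ⟨ht0, htε⟩, hf⟩ := h ε (ENNReal.ofReal_pos.1 hε)
    exact ⟨_, ⟨t, ⟨ht0, hf⟩, rfl⟩, (ENNReal.ofReal_le_ofReal htε.le).trans_lt hεb⟩

theorem minTime_eq_zero_of_mem_sub_asympCone (hx : x ∈ Q - asympCone F 0) :
    minTime F Q x = 0 := by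
  obtain ⟨q, hq, d, hd, rfl⟩ := hx
  refine minTime_eq_zero_iff_forall_exists.2 fun ε hε ↦ ?_
  have hε2 : 0 < ε / 2 := half_pos hε
  refine ⟨ε / 2, ⟨hε2.le, half_lt_self hε⟩, (ε / 2)⁻¹ • d,
    by simpa using hd _ (inv_pos.2 hε2), ?_⟩
  rwa [smul_smul, mul_inv_cancel₀ hε2.ne', one_smul, sub_add_cancel]

theorem mem_asympCone_zero_of_tendsto_smul {ι : Type*} {l : Filter ι} [l.NeBot]
    (hFcl : IsClosed F) (hFconv : Convex ℝ F) (h0F : (0 : X) ∈ F)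
    {t : ι → ℝ} {f : ι → X} {d : X} (ht0 : ∀ i, 0 ≤ t i) (ht : Tendsto t l (𝓝 0))
    (hf : ∀ i, f i ∈ F) (hd : Tendsto (fun i ↦ t i • f i) l (𝓝 d)) :
    d ∈ asympCone F 0 := by
  intro s hs
  rw [zero_add]
  have hsmall : ∀ᶠ i in l, s * t i ≤ 1 := by
    simpa using (ht.const_mul s).eventually (eventually_le_nhds (by simp : s * 0 < 1))
  have hmem : ∀ᶠ i in l, (s * t i) • f i ∈ F :=
    hsmall.mono fun i hi ↦
      hFconv.smul_mem_of_zero_mem h0F (hf i) ⟨mul_nonneg hs.le (ht0 i), hi⟩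
  refine hFcl.mem_of_tendsto ?_ hmem
  simpa [smul_smul] using hd.const_smul s

theorem mem_sub_asympCone_of_minTime_eq_zero (hFcl : IsClosed F) (hFconv : Convex ℝ F)
    (h0F : (0 : X) ∈ F) (hQcpt : IsCompact Q) (h : minTime F Q x = 0) :
    x ∈ Q - asympCone F 0 := by
  choose t ht f hf hQ using fun n : ℕ ↦
    minTime_eq_zero_iff_forall_exists.1 h (1 / ((n : ℝ) + 1)) Nat.one_div_pos_of_nat
  have ht_lim : Tendsto t atTop (𝓝 0) :=
    squeeze_zero (fun n ↦ (ht n).1) (fun n ↦ (ht n).2.le) tendsto_one_div_add_atTop_nhds_zero_nat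
  obtain ⟨q, hq, φ, hφ, hlim⟩ := hQcpt.tendsto_subseq hQ
  refine ⟨q, hq, q - x, ?_, sub_sub_cancel q x⟩
  refine mem_asympCone_zero_of_tendsto_smul hFcl hFconv h0F (fun n ↦ (ht (φ n)).1)
    (ht_lim.comp hφ.tendsto_atTop) (fun n ↦ hf (φ n)) ?_
  simpa using hlim.sub_const x

end MinTime

theorem minTime_eq_zero_iff_general {X : Type*} [NormedAddCommGroup X] [NormedSpace ℝ X]
    (F : Set X) (hFcl : IsClosed F) (hFconv : Convex ℝ F)
    (h0F : (0 : X) ∈ F) (Q : Set X) (hQcpt : IsCompact Q)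
    (x : X) :
    minTime F Q x = 0 ↔ x ∈ Q - asympCone F 0 :=
  ⟨mem_sub_asympCone_of_minTime_eq_zero hFcl hFconv h0F hQcpt,
    minTime_eq_zero_of_mem_sub_asympCone⟩

theorem minTime_eq_zero_iff {X : Type*} [NormedAddCommGroup X] [NormedSpace ℝ X]
    [FiniteDimensional ℝ X]
    (F : Set X) (hFne : F.Nonempty) (hFcl : IsClosed F) (hFconv : Convex ℝ F)
    (h0F : (0 : X) ∈ F) (Q : Set X) (hQne : Q.Nonempty) (hQcpt : IsCompact Q)
    (x : X) :
    minTime F Q x = 0 ↔ x ∈ Q - asympCone F 0 :=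
  minTime_eq_zero_iff_general F hFcl hFconv h0F Q hQcpt x
end

section
/- Let X be a finite-dimensional normed space, F ⊆ X nonempty closed convex with 0 ∈ F, and Q ⊆ X nonempty compact. Then the minimal time function T_Q^F is lower semicontinuous on X. -/
open scoped ENNReal Pointwise

/-!
A point `y` can reach `Q` in time exactly `r` iff `y ∈ Q + (-r) • F`. Since `F` is star-shaped
about `0`, anything reachable in a shorter time is also reachable in time exactly `r`; hence
`T_Q^F < r` forces `y ∈ Q + (-r) • F`, which in turn forces `T_Q^F ≤ r`. The set
`Q + (-r) • F` is closed (compact plus closed), so for `r` strictly between `c` and `T_Q^F(x)`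
its complement is a neighbourhood of `x` on which `T_Q^F > c`.
-/

section

variable {X : Type*} [NormedAddCommGroup X] [NormedSpace ℝ X] {F Q : Set X} {x : X} {r : ℝ}

theorem minTime_le_ofReal_s7 (hr : 0 ≤ r) (hx : x ∈ Q + (-r) • F) :
    minTime F Q x ≤ ENNReal.ofReal r := by
  obtain ⟨q, hq, _, ⟨f, hf, rfl⟩, rfl⟩ := hx
  refine sInf_le ⟨r, ⟨hr, f, hf, ?_⟩, rfl⟩
  convert hq using 1
  module

theorem mem_add_neg_smul_of_minTime_lt (hF : StarConvex ℝ 0 F) (hr : 0 < r)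
    (hx : minTime F Q x < ENNReal.ofReal r) : x ∈ Q + (-r) • F := by
  obtain ⟨_, ⟨t, ⟨ht, f, hf, hQ⟩, rfl⟩, htr⟩ := sInf_lt_iff.mp hx
  have htr : t ≤ r := ((ENNReal.ofReal_lt_ofReal_iff hr).mp htr).le
  have hscaled : (t / r) • f ∈ F :=
    hF.smul_mem hf (div_nonneg ht hr.le) ((div_le_one hr).mpr htr)
  refine ⟨x + t • f, hQ, (-r) • (t / r) • f, Set.smul_mem_smul_set hscaled, ?_⟩
  rw [smul_smul, neg_mul, mul_div_cancel₀ t hr.ne']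
  module

end

theorem minTime_lowerSemicontinuous_general {X : Type*} [NormedAddCommGroup X] [NormedSpace ℝ X]
    (F : Set X) (hFcl : IsClosed F) (hFconv : Convex ℝ F)
    (h0F : (0 : X) ∈ F) (Q : Set X) (hQcpt : IsCompact Q) :
    LowerSemicontinuous (minTime F Q) := by
  intro x c hc
  obtain ⟨d, hcd, hdx⟩ := exists_between hc
  have hd : ENNReal.ofReal d.toReal = d := ENNReal.ofReal_toReal hdx.ne_top
  have hr : 0 < d.toReal := ENNReal.toReal_pos (pos_of_gt hcd).ne' hdx.ne_top
  have hclosed : IsClosed (Q + (-d.toReal) • F) :=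
    (hFcl.smul_of_ne_zero (neg_ne_zero.mpr hr.ne')).add_left_of_isCompact hQcpt
  have hx : x ∉ Q + (-d.toReal) • F := fun hx =>
    ((minTime_le_ofReal_s7 hr.le hx).trans_lt (hd.symm ▸ hdx)).false
  filter_upwards [hclosed.isOpen_compl.mem_nhds hx] with y hy
  refine hcd.trans_le (not_lt.mp fun hy' => hy ?_)
  exact mem_add_neg_smul_of_minTime_lt (hFconv.starConvex h0F) hr (hd.symm ▸ hy')

theorem minTime_lowerSemicontinuous {X : Type*} [NormedAddCommGroup X] [NormedSpace ℝ X]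
    [FiniteDimensional ℝ X]
    (F : Set X) (hFne : F.Nonempty) (hFcl : IsClosed F) (hFconv : Convex ℝ F)
    (h0F : (0 : X) ∈ F) (Q : Set X) (hQne : Q.Nonempty) (hQcpt : IsCompact Q) :
    LowerSemicontinuous (minTime F Q) :=
  minTime_lowerSemicontinuous_general F hFcl hFconv h0F Q hQcpt
end

section
/- Let X be a normed space with 0 ∈ int F for a closed convex set F ⊆ X, and Q ⊆ X nonempty closed. Then the minimal time function T_Q^F is ℓ-Lipschitz on X, where ℓ = inf{1/r : B(0;r) ⊆ F, r > 0}. -/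
/-!
If `B(0, r) ⊆ F` then every `v` lies in `(‖v‖ / r) • F`, and for convex `F` we have
`t • F + s • F = (t + s) • F`. Hence if `y + t • F` meets `Q`, so does
`x + (t + ‖x - y‖ / r) • F`, since `x + (y - x) + t • F = y + t • F`. This gives
`T(x) ≤ T(y) + ‖x - y‖ / r`; taking the infimum over admissible `r` and swapping `x`, `y`
yields the Lipschitz bound with constant `ℓ`.
-/

open scoped ENNReal Pointwise

open Metric

theorem le_mul_csInf {c d : ℝ} {L : Set ℝ} (hL : L.Nonempty) (hd : 0 ≤ d)
    (h : ∀ l ∈ L, c ≤ d * l) : c ≤ d * sInf L := by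
  rw [← smul_eq_mul, ← Real.sInf_smul_of_nonneg hd]
  exact le_csInf (hL.smul_set) (by rintro _ ⟨l, hl, rfl⟩; exact h l hl)

section
variable {X : Type*} [NormedAddCommGroup X] [NormedSpace ℝ X]

theorem mem_norm_div_smul_of_closedBall_subset {F : Set X} {r : ℝ} (hr : 0 < r)
    (hF : closedBall (0 : X) r ⊆ F) (v : X) : v ∈ (‖v‖ / r) • F := by
  rcases eq_or_ne v 0 with rfl | hv
  · exact ⟨0, hF (mem_closedBall_self hr.le), smul_zero _⟩
  have hv' : ‖v‖ ≠ 0 := norm_ne_zero_iff.2 hv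
  refine ⟨(r / ‖v‖) • v, hF ?_, ?_⟩
  · rw [mem_closedBall_zero_iff, norm_smul, Real.norm_of_nonneg (by positivity),
      div_mul_cancel₀ _ hv']
  · dsimp only
    rw [smul_smul, div_mul_div_cancel₀' hv', div_self hr.ne', one_smul]

def reachTimes (F Q : Set X) (x : X) : Set ℝ := {t | 0 ≤ t ∧ ∃ f ∈ F, x + t • f ∈ Q}

theorem zero_mem_reachTimes {F Q : Set X} {q : X} (hF : F.Nonempty) (hq : q ∈ Q) :
    0 ∈ reachTimes F Q q :=
  ⟨le_rfl, hF.some, hF.some_mem, by simpa using hq⟩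

theorem add_norm_div_mem_reachTimes {F Q : Set X} {r t : ℝ} {x y : X} (hFconv : Convex ℝ F)
    (hr : 0 < r) (hF : closedBall (0 : X) r ⊆ F) (ht : t ∈ reachTimes F Q y) :
    t + ‖x - y‖ / r ∈ reachTimes F Q x := by
  obtain ⟨ht0, f, hf, hyf⟩ := ht
  have hmem : t • f + (y - x) ∈ (t + ‖x - y‖ / r) • F := by
    rw [hFconv.add_smul ht0 (by positivity), norm_sub_rev]
    exact Set.add_mem_add (Set.smul_mem_smul_set hf)
      (mem_norm_div_smul_of_closedBall_subset hr hF _)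
  obtain ⟨g, hg, hgf⟩ := hmem
  refine ⟨by positivity, g, hg, ?_⟩
  dsimp only at hgf
  rw [hgf]
  convert hyf using 1
  abel

theorem reachTimes_bddBelow (F Q : Set X) (x : X) : BddBelow (reachTimes F Q x) :=
  ⟨0, fun _ ht => ht.1⟩

theorem csInf_reachTimes_le {F Q : Set X} {r : ℝ} (hFconv : Convex ℝ F)
    (hr : 0 < r) (hF : closedBall (0 : X) r ⊆ F) (x : X) {y : X}
    (hy : (reachTimes F Q y).Nonempty) :
    sInf (reachTimes F Q x) ≤ sInf (reachTimes F Q y) + ‖x - y‖ / r := by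
  rw [← sub_le_iff_le_add]
  refine le_csInf hy fun t ht => sub_le_iff_le_add.2 ?_
  exact csInf_le (reachTimes_bddBelow F Q x) (add_norm_div_mem_reachTimes hFconv hr hF ht)

theorem minTime_eq_ofReal_csInf {F Q : Set X} {x : X} (h : (reachTimes F Q x).Nonempty) :
    minTime F Q x = ENNReal.ofReal (sInf (reachTimes F Q x)) :=
  (ENNReal.ofReal_mono.map_csInf_of_continuousAt ENNReal.continuous_ofReal.continuousAt h
    (reachTimes_bddBelow F Q x)).symm

theorem toReal_minTime {F Q : Set X} {x : X} (h : (reachTimes F Q x).Nonempty) :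
    (minTime F Q x).toReal = sInf (reachTimes F Q x) := by
  rw [minTime_eq_ofReal_csInf h, ENNReal.toReal_ofReal (Real.sInf_nonneg fun _ ht => ht.1)]

end

theorem minTime_lipschitz_general {X : Type*} [NormedAddCommGroup X] [NormedSpace ℝ X]
    (F : Set X) (hFconv : Convex ℝ F)
    (h0F : (0 : X) ∈ interior F)
    (Q : Set X) (hQne : Q.Nonempty)
    (ℓ : ℝ) (hℓ : ℓ = sInf {l : ℝ | ∃ r : ℝ, 0 < r ∧ Metric.closedBall (0 : X) r ⊆ F ∧ l = 1 / r}) :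
    (∀ x : X, minTime F Q x ≠ ⊤) ∧
    (∀ x y : X, |(minTime F Q x).toReal - (minTime F Q y).toReal| ≤ ℓ * ‖x - y‖) := by
  obtain ⟨r, hr, hrF⟩ := nhds_basis_closedBall.mem_iff.1 (mem_interior_iff_mem_nhds.1 h0F)
  obtain ⟨q, hq⟩ := hQne
  have hq0 : 0 ∈ reachTimes F Q q :=
    zero_mem_reachTimes ⟨0, hrF (mem_closedBall_self hr.le)⟩ hq
  have hne : ∀ x, (reachTimes F Q x).Nonempty := fun x =>
    ⟨_, add_norm_div_mem_reachTimes hFconv hr hrF hq0⟩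
  have hlip : ∀ x y, sInf (reachTimes F Q x) ≤ sInf (reachTimes F Q y) + ℓ * ‖x - y‖ := by
    intro x y
    rw [← sub_le_iff_le_add', hℓ, mul_comm]
    refine le_mul_csInf ⟨1 / r, r, hr, hrF, rfl⟩ (norm_nonneg _) ?_
    rintro _ ⟨s, hs, hsF, rfl⟩
    have := csInf_reachTimes_le hFconv hs hsF x (hne y)
    rw [mul_one_div]
    linarith
  refine ⟨fun x => minTime_eq_ofReal_csInf (hne x) ▸ ENNReal.ofReal_ne_top, fun x y => ?_⟩
  rw [toReal_minTime (hne x), toReal_minTime (hne y), abs_sub_le_iff]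
  exact ⟨sub_le_iff_le_add'.2 (hlip x y), sub_le_iff_le_add'.2 (norm_sub_rev x y ▸ hlip y x)⟩

theorem minTime_lipschitz {X : Type*} [NormedAddCommGroup X] [NormedSpace ℝ X]
    (F : Set X) (hFcl : IsClosed F) (hFconv : Convex ℝ F)
    (h0F : (0 : X) ∈ interior F)
    (Q : Set X) (hQne : Q.Nonempty) (hQcl : IsClosed Q)
    (ℓ : ℝ) (hℓ : ℓ = sInf {l : ℝ | ∃ r : ℝ, 0 < r ∧ Metric.closedBall (0 : X) r ⊆ F ∧ l = 1 / r}) :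
    (∀ x : X, minTime F Q x ≠ ⊤) ∧
    (∀ x y : X, |(minTime F Q x).toReal - (minTime F Q y).toReal| ≤ ℓ * ‖x - y‖) :=
  minTime_lipschitz_general F hFconv h0F Q hQne ℓ hℓ
end

section
/- Let X be a normed space, F ⊆ X nonempty closed convex, Q ⊆ X nonempty convex, and x̄ ∈ Q. Then the convex subdifferential of T_Q^F at x̄ equals N(x̄; Q) ∩ C*, where N(x̄; Q) = {x* ∈ X* : ⟨x*, x − x̄⟩ ≤ 0 for all x ∈ Q} and C* = {x* ∈ X* : sup_{f∈F} ⟨−x*, f⟩ ≤ 1}. -/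
open scoped ENNReal Pointwise

/-!
Since `T` vanishes on `Q`, the subgradient inequality at `x̄` tested on `Q` is exactly the normal
cone condition, and tested at `x̄ - f` (which reaches `Q` in time at most `1`) it gives
`⟨-x*, f⟩ ≤ 1`. Conversely, if `x + t f ∈ Q` with `t ≥ 0` and `f ∈ F`, then
`⟨x*, x - x̄⟩ = ⟨x*, x + t f - x̄⟩ + t ⟨-x*, f⟩ ≤ 0 + t`, and taking the infimum over such `t`
gives the subgradient inequality.
-/

namespace minTime

variable {X : Type*} [NormedAddCommGroup X] [NormedSpace ℝ X] {F Q : Set X} {x : X}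

theorem le_ofReal {t : ℝ} {f : X} (ht : 0 ≤ t) (hf : f ∈ F) (hx : x + t • f ∈ Q) :
    minTime F Q x ≤ ENNReal.ofReal t :=
  sInf_le ⟨t, ⟨ht, f, hf, hx⟩, rfl⟩

theorem ofReal_le {c : ℝ} (h : ∀ t : ℝ, 0 ≤ t → ∀ f ∈ F, x + t • f ∈ Q → c ≤ t) :
    ENNReal.ofReal c ≤ minTime F Q x :=
  le_sInf <| by
    rintro _ ⟨t, ⟨ht, f, hf, hx⟩, rfl⟩
    exact ENNReal.ofReal_le_ofReal (h t ht f hf hx)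

theorem eq_zero_of_mem (hF : F.Nonempty) (hx : x ∈ Q) : minTime F Q x = 0 := by
  obtain ⟨f, hf⟩ := hF
  exact nonpos_iff_eq_zero.mp <| by simpa using le_ofReal le_rfl hf (by simpa using hx)

theorem sub_le_one {q f : X} (hq : q ∈ Q) (hf : f ∈ F) : minTime F Q (q - f) ≤ 1 := by
  simpa using le_ofReal zero_le_one hf (by simpa using hq)

end minTime

theorem ContinuousLinearMap.apply_sub_le_of_mem_normalCone {X : Type*} [NormedAddCommGroup X]
    [NormedSpace ℝ X] {F Q : Set X} {x' : X →L[ℝ] ℝ} {xbar x f : X} {t : ℝ}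
    (hN : ∀ q ∈ Q, x' (q - xbar) ≤ 0) (hC : ∀ f ∈ F, (-x') f ≤ 1)
    (ht : 0 ≤ t) (hf : f ∈ F) (hx : x + t • f ∈ Q) :
    x' (x - xbar) ≤ t := by
  have hreach : x' (x - xbar) + t * x' f ≤ 0 := by
    simpa [add_sub_right_comm] using hN _ hx
  have hdual : -x' f ≤ 1 := by simpa using hC f hf
  nlinarith

theorem subdiff_minTime_at_mem_general {X : Type*} [NormedAddCommGroup X] [NormedSpace ℝ X]
    (F : Set X) (hFne : F.Nonempty) (Q : Set X)
    (xbar : X) (hxbar : xbar ∈ Q) :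
    {x' : X →L[ℝ] ℝ | ∀ x : X,
        ENNReal.ofReal (x' (x - xbar)) + minTime F Q xbar ≤ minTime F Q x} =
      {x' : X →L[ℝ] ℝ | ∀ x ∈ Q, x' (x - xbar) ≤ 0} ∩
      {x' : X →L[ℝ] ℝ | ∀ f ∈ F, (-x') f ≤ 1} := by
  ext x'
  simp only [Set.mem_ofPred, Set.mem_inter_iff, minTime.eq_zero_of_mem hFne hxbar, add_zero]
  constructor
  · intro h
    refine ⟨fun x hx => ?_, fun f hf => ?_⟩
    · simpa [minTime.eq_zero_of_mem hFne hx] using h x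
    · simpa using ENNReal.ofReal_le_one.mp ((h (xbar - f)).trans (minTime.sub_le_one hxbar hf))
  · rintro ⟨hN, hC⟩ x
    exact minTime.ofReal_le fun t ht f hf hx => x'.apply_sub_le_of_mem_normalCone hN hC ht hf hx

theorem subdiff_minTime_at_mem {X : Type*} [NormedAddCommGroup X] [NormedSpace ℝ X]
    (F : Set X) (hFne : F.Nonempty) (hFcl : IsClosed F) (hFconv : Convex ℝ F)
    (Q : Set X) (hQne : Q.Nonempty) (hQconv : Convex ℝ Q)
    (xbar : X) (hxbar : xbar ∈ Q) :
    {x' : X →L[ℝ] ℝ | ∀ x : X,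
        ENNReal.ofReal (x' (x - xbar)) + minTime F Q xbar ≤ minTime F Q x} =
      {x' : X →L[ℝ] ℝ | ∀ x ∈ Q, x' (x - xbar) ≤ 0} ∩
      {x' : X →L[ℝ] ℝ | ∀ f ∈ F, (-x') f ≤ 1} :=
  subdiff_minTime_at_mem_general F hFne Q xbar hxbar
end

section
/- Let X be a normed space, F ⊆ X nonempty closed convex, Q ⊆ X nonempty, and r > 0. Suppose x ∈ X satisfies T_Q^F(x) < ∞ and T_Q^F(x) > r, and let Q_r = {u ∈ X : T_Q^F(u) ≤ r}. Then T_Q^F(x) = T_{Q_r}^F(x) + r. -/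
/-!
Dynamic programming principle. Since `F` is convex, `t • F + s • F = (t + s) • F`, so reaching
`x + t • f` and then `Q` in time `s` reaches `Q` from `x` in time `t + s`; this gives
`T_Q ≤ T_{Q_r} + r`. Conversely, if `x + t • f ∈ Q` then `t ≥ r` because `T_Q(x) > r`, and the
point `x + (t - r) • f` lies in `Q_r`, which gives `T_{Q_r} + r ≤ T_Q`.
-/

open scoped ENNReal Pointwise

section MinTime

variable {X : Type*} [NormedAddCommGroup X] [NormedSpace ℝ X] {F Q : Set X} {x : X}

lemma minTime_le_of_mem {t : ℝ} (ht : 0 ≤ t) {f : X} (hf : f ∈ F) (h : x + t • f ∈ Q) :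
    minTime F Q x ≤ ENNReal.ofReal t :=
  sInf_le ⟨t, ⟨ht, f, hf, h⟩, rfl⟩

lemma le_minTime_iff {c : ℝ≥0∞} :
    c ≤ minTime F Q x ↔ ∀ t : ℝ, 0 ≤ t → ∀ f ∈ F, x + t • f ∈ Q → c ≤ ENNReal.ofReal t := by
  simp only [minTime, le_sInf_iff, Set.forall_mem_image, Set.mem_ofPred_eq]
  exact ⟨fun h t ht f hf hQ => h ⟨ht, f, hf, hQ⟩, fun h t ⟨ht, f, hf, hQ⟩ => h t ht f hf hQ⟩

lemma minTime_le_ofReal_add_minTime (hF : Convex ℝ F) {t : ℝ} (ht : 0 ≤ t) {f : X}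
    (hf : f ∈ F) : minTime F Q x ≤ ENNReal.ofReal t + minTime F Q (x + t • f) := by
  rw [← tsub_le_iff_left, le_minTime_iff]
  intro s hs g hg hQ
  have hcomb : t • f + s • g ∈ (t + s) • F := by
    rw [hF.add_smul ht hs]
    exact Set.add_mem_add (Set.smul_mem_smul_set hf) (Set.smul_mem_smul_set hg)
  obtain ⟨h, hh, hh_eq⟩ := hcomb
  have hreach : x + (t + s) • h ∈ Q := by
    simp only at hh_eq
    rwa [hh_eq, ← add_assoc]
  rw [tsub_le_iff_left, ← ENNReal.ofReal_add ht hs]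
  exact minTime_le_of_mem (add_nonneg ht hs) hh hreach

lemma minTime_le_minTime_add (hF : Convex ℝ F) {S : Set X} {c : ℝ≥0∞}
    (hS : ∀ u ∈ S, minTime F Q u ≤ c) : minTime F Q x ≤ minTime F S x + c := by
  rw [← tsub_le_iff_right, le_minTime_iff]
  intro t ht f hf hu
  rw [tsub_le_iff_right]
  exact (minTime_le_ofReal_add_minTime hF ht hf).trans (add_le_add_right (hS _ hu) _)

lemma minTime_sublevel_add_le {r : ℝ} (hr : 0 ≤ r) (hgt : ENNReal.ofReal r < minTime F Q x) :
    minTime F {u | minTime F Q u ≤ ENNReal.ofReal r} x + ENNReal.ofReal r ≤ minTime F Q x := by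
  rw [le_minTime_iff]
  intro t ht f hf hQ
  have hrt : r ≤ t := by
    by_contra! htr
    exact hgt.not_ge ((minTime_le_of_mem ht hf hQ).trans (ENNReal.ofReal_le_ofReal htr.le))
  have hsub : x + (t - r) • f ∈ {u | minTime F Q u ≤ ENNReal.ofReal r} :=
    minTime_le_of_mem hr hf (by rwa [add_assoc, ← add_smul, sub_add_cancel])
  calc minTime F {u | minTime F Q u ≤ ENNReal.ofReal r} x + ENNReal.ofReal r
      ≤ ENNReal.ofReal (t - r) + ENNReal.ofReal r :=
        add_le_add_left (minTime_le_of_mem (sub_nonneg.2 hrt) hf hsub) _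
    _ = ENNReal.ofReal t := by rw [← ENNReal.ofReal_add (sub_nonneg.2 hrt) hr, sub_add_cancel]

end MinTime

theorem minTime_enlargement_general {X : Type*} [NormedAddCommGroup X] [NormedSpace ℝ X]
    (F : Set X) (hFconv : Convex ℝ F)
    (Q : Set X) (r : ℝ) (hr : 0 < r)
    (x : X) (hgt : ENNReal.ofReal r < minTime F Q x) :
    minTime F Q x = minTime F {u : X | minTime F Q u ≤ ENNReal.ofReal r} x + ENNReal.ofReal r :=
  le_antisymm (minTime_le_minTime_add hFconv fun _ hu => hu) (minTime_sublevel_add_le hr.le hgt)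

theorem minTime_enlargement {X : Type*} [NormedAddCommGroup X] [NormedSpace ℝ X]
    (F : Set X) (hFne : F.Nonempty) (hFcl : IsClosed F) (hFconv : Convex ℝ F)
    (Q : Set X) (hQne : Q.Nonempty) (r : ℝ) (hr : 0 < r)
    (x : X) (hfin : minTime F Q x ≠ ⊤) (hgt : ENNReal.ofReal r < minTime F Q x) :
    minTime F Q x = minTime F {u : X | minTime F Q u ≤ ENNReal.ofReal r} x + ENNReal.ofReal r :=
  minTime_enlargement_general F hFconv Q r hr x hgt
end

section
/- Let X be a normed space, F ⊆ X nonempty closed convex, Q ⊆ X nonempty convex, and x̄ ∈ Q. Then the singular subdifferential ∂^∞T_Q^F(x̄) equals N(x̄; Q) ∩ F*₊, where F*₊ = {x* ∈ X* : ⟨x*, f⟩ ≥ 0 for all f ∈ F}. -/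
open scoped ENNReal Pointwise

/-- The singular subdifferential of `T_Q^F` at `xbar`: functionals `x*` such that `(x*, 0)` is
normal to the epigraph of `T_Q^F` at `(xbar, T_Q^F xbar)`. -/
def singularSubdiff {X : Type*} [NormedAddCommGroup X] [NormedSpace ℝ X]
    (F Q : Set X) (xbar : X) : Set (X →L[ℝ] ℝ) :=
  {x' | ∀ (x : X) (lam : ℝ), 0 ≤ lam → minTime F Q x ≤ ENNReal.ofReal lam →
      x' (x - xbar) + 0 * (lam - (minTime F Q xbar).toReal) ≤ 0}

theorem singularSubdiff_minTime {X : Type*} [NormedAddCommGroup X] [NormedSpace ℝ X]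
    (F : Set X) (hFne : F.Nonempty) (hFcl : IsClosed F) (hFconv : Convex ℝ F)
    (Q : Set X) (hQne : Q.Nonempty) (hQconv : Convex ℝ Q)
    (xbar : X) (hxbar : xbar ∈ Q) :
    singularSubdiff F Q xbar =
      {x' : X →L[ℝ] ℝ | ∀ x ∈ Q, x' (x - xbar) ≤ 0} ∩
      {x' : X →L[ℝ] ℝ | ∀ f ∈ F, 0 ≤ x' f} := by
  obtain ⟨f0, hf0⟩ := hFne
  ext x'
  simp only [Set.mem_inter_iff, Set.mem_setOf_eq, singularSubdiff]
  constructor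
  · intro h
    constructor
    · intro x hx
      have hm : minTime F Q x ≤ ENNReal.ofReal 0 := by
        apply sInf_le
        exact ⟨0, ⟨le_refl 0, f0, hf0, by simpa using hx⟩, rfl⟩
      have := h x 0 le_rfl hm
      linarith
    · intro f hf
      have hm : minTime F Q (xbar - (1:ℝ) • f) ≤ ENNReal.ofReal 1 := by
        apply sInf_le
        exact ⟨1, ⟨zero_le_one, f, hf, by simpa using hxbar⟩, rfl⟩
      have h2 := h (xbar - (1:ℝ) • f) 1 zero_le_one hm
      have : x' (xbar - (1:ℝ) • f - xbar) = -x' f := by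
        rw [show xbar - (1:ℝ) • f - xbar = -((1:ℝ) • f) by abel, map_neg, map_smul]
        simp
      rw [this] at h2
      linarith
  · rintro ⟨h1, h2⟩ x lam hlam hm
    have hne : {t : ℝ | 0 ≤ t ∧ ∃ f ∈ F, x + t • f ∈ Q}.Nonempty := by
      by_contra hne
      rw [Set.not_nonempty_iff_eq_empty] at hne
      rw [minTime, hne] at hm
      simp at hm
    obtain ⟨t, ht0, f, hf, hQ⟩ := hne
    have hq := h1 _ hQ
    have hxf : x' (x + t • f - xbar) = x' (x - xbar) + t * x' f := by
      rw [show x + t • f - xbar = (x - xbar) + t • f by abel, map_add, map_smul]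
      rfl
    rw [hxf] at hq
    nlinarith [h2 f hf]
end
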